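/- arXiv:1710.02793 — 2 statements merged into one kernel-verified Lean document; each statement's English description precedes it below -/
import Mathlib

section
/- Uniqueness from two moments: if ρ₁ is an aperiodic distribution on ℤ_L, x₁ has non-vanishing DFT, and (x₂, ρ₂) is another signal–distribution pair with the same first and second moments (x₁ ∗ ρ₁ = x₂ ∗ ρ₂ and C_{x₁} D_{ρ₁} C_{x₁}^T = C_{x₂} D_{ρ₂} C_{x₂}^T), then there exists s ∈ ℤ_L with x₂ = R_s x₁ and ρ₂ = R_{−s} ρ₁. -/
/-!
Under the discrete Fourier transform `X = 𝓕 x`, `P = 𝓕 ρ`, the two moment identities become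
`P₁ k * X₁ k = P₂ k * X₂ k` and `P₁ (k + l) * X₁ k * X₁ l = P₂ (k + l) * X₂ k * X₂ l`.
Since `X₁` does not vanish, `u = X₂ / X₁` satisfies `u (m + k) = u m * u k` whenever `P₁ m ≠ 0`.
Aperiodicity of `ρ₁` says exactly that the support of `P₁` generates `ℤ_L`, so `u` is an additive
character `k ↦ stdAddChar (t * k)`, and multiplication by it is the Fourier side of a cyclic
shift by `t`.
-/

/-- The discrete Fourier transform of a real signal. -/
noncomputable def dftR {L : ℕ} [NeZero L] (x : ZMod L → ℝ) (k : ZMod L) : ℂ :=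
  ∑ i : ZMod L, (x i : ℂ) *
    Complex.exp (-(2 * (Real.pi : ℂ) * Complex.I * (k.val : ℂ) * (i.val : ℂ)) / (L : ℂ))

/-- A distribution on `ℤ_L` is aperiodic if no nonzero shift leaves it invariant. -/
def Aperiodic {L : ℕ} (ρ : ZMod L → ℝ) : Prop :=
  ¬ ∃ ℓ : ZMod L, ℓ ≠ 0 ∧ ∀ k, ρ (k + ℓ) = ρ k

open Finset ZMod

lemma map_add_eq_mul_of_closure_eq_top {G M : Type*} [AddGroup G] [CommMonoid M] {u : G → M}
    (h0 : u 0 = 1) {S : Set G} (hS : AddSubgroup.closure S = ⊤)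
    (hu : ∀ m ∈ S, ∀ k, u (m + k) = u m * u k) (a b : G) : u (a + b) = u a * u b := by
  have ha : a ∈ AddSubgroup.closure S := hS ▸ AddSubgroup.mem_top a
  induction ha using AddSubgroup.closure_induction generalizing b with
  | mem m hm => exact hu m hm b
  | zero => rw [zero_add, h0, one_mul]
  | add m n _ _ hm hn => rw [add_assoc, hm, hn, hm n, mul_assoc]
  | neg m _ hm =>
    have hinv : u m * u (-m) = 1 := by rw [← hm, add_neg_cancel, h0]
    calc u (-m + b) = u (-m) * (u m * u (-m + b)) := by
          rw [← mul_assoc, mul_comm (u (-m)), hinv, one_mul]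
      _ = u (-m) * u b := by rw [← hm, add_neg_cancel_left]

lemma exists_addChar_of_moment_identities {G K : Type*} [AddCommGroup G] [Field K]
    {P₁ P₂ X₁ X₂ : G → K} (hX₁ : ∀ k, X₁ k ≠ 0) (hP₁ : P₁ 0 = 1) (hP₂ : P₂ 0 = 1)
    (h1 : ∀ k, P₁ k * X₁ k = P₂ k * X₂ k)
    (h2 : ∀ k l, P₁ (k + l) * X₁ k * X₁ l = P₂ (k + l) * X₂ k * X₂ l)
    (hspan : AddSubgroup.closure (Function.support P₁) = ⊤) :
    ∃ ψ : AddChar G K, ∀ k, X₂ k = ψ k * X₁ k ∧ P₁ k = ψ k * P₂ k := by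
  set u : G → K := fun k ↦ X₂ k / X₁ k
  have hX₂ : ∀ k, X₂ k = u k * X₁ k := fun k ↦ (div_mul_cancel₀ _ (hX₁ k)).symm
  have hneg : ∀ k, u k * u (-k) = 1 := fun k ↦ by
    have h := h2 k (-k)
    rw [add_neg_cancel, hP₁, hP₂, hX₂ k, hX₂ (-k)] at h
    exact mul_left_cancel₀ (mul_ne_zero (hX₁ k) (hX₁ (-k))) (by linear_combination -h)
  have h0 : u 0 = 1 := by
    have h := h1 0
    rw [hP₁, hP₂, hX₂ 0] at h
    exact mul_right_cancel₀ (hX₁ 0) (by linear_combination -h)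
  have hP : ∀ k, P₁ k = u k * P₂ k := fun k ↦
    mul_right_cancel₀ (hX₁ k) (by rw [h1, hX₂]; ring)
  -- On the support of `P₁`, dividing the second-moment identity at `(m + k, -k)` by the
  -- first-moment identity at `m` leaves `u (m + k) * u (-k) = u m`.
  have hsupp : ∀ m ∈ Function.support P₁, ∀ k, u (m + k) = u m * u k := by
    intro m hm k
    have h := h2 (m + k) (-k)
    rw [add_neg_cancel_right, hP m, hX₂, hX₂] at h
    have hP₂m : P₂ m ≠ 0 := right_ne_zero_of_mul (a := u m) (hP m ▸ hm)
    have hc : P₂ m * X₁ (m + k) * X₁ (-k) ≠ 0 := mul_ne_zero (mul_ne_zero hP₂m (hX₁ _)) (hX₁ _)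
    have hm' : u (m + k) * u (-k) = u m := mul_left_cancel₀ hc (by linear_combination -h)
    calc u (m + k) = u (m + k) * u (-k) * u k := by rw [mul_assoc, mul_comm (u (-k)), hneg, mul_one]
      _ = u m * u k := by rw [hm']
  refine ⟨⟨u, h0, map_add_eq_mul_of_closure_eq_top h0 hspan hsupp⟩, fun k ↦ ⟨hX₂ k, hP k⟩⟩

namespace ZMod

variable {N : ℕ} [NeZero N]

lemma dft_comp_add_right {E : Type*} [AddCommGroup E] [Module ℂ E] (Φ : ZMod N → E)
    (s k : ZMod N) : 𝓕 (fun j ↦ Φ (j + s)) k = stdAddChar (s * k) • 𝓕 Φ k := by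
  rw [dft_apply, dft_apply, smul_sum]
  refine Fintype.sum_equiv (Equiv.addRight s) _ _ fun j ↦ ?_
  rw [Equiv.coe_addRight, smul_smul, ← AddChar.map_add_eq_mul]
  congr 2
  ring

lemma dft_stdAddChar_mul (Φ : ZMod N → ℂ) (l k : ZMod N) :
    𝓕 (fun j ↦ stdAddChar (-(j * l)) * Φ j) k = 𝓕 Φ (k + l) := by
  simp only [dft_apply, smul_eq_mul, ← mul_assoc, ← AddChar.map_add_eq_mul]
  refine sum_congr rfl fun j _ ↦ ?_
  congr 2
  ring

lemma dft_conv (ρ x : ZMod N → ℂ) (k : ZMod N) :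
    𝓕 (fun i ↦ ∑ s, ρ s * x (i - s)) k = 𝓕 ρ k * 𝓕 x k := by
  have hconv : (fun i ↦ ∑ s, ρ s * x (i - s)) = ∑ s, ρ s • fun i ↦ x (i + -s) := by
    ext i; simp [sub_eq_add_neg]
  rw [hconv, map_sum, Finset.sum_apply, dft_apply, sum_mul]
  refine sum_congr rfl fun s _ ↦ ?_
  rw [dft_const_smul, Pi.smul_apply, dft_comp_add_right, smul_eq_mul, smul_eq_mul, smul_eq_mul]
  ring_nf

lemma dft_dft_secondMoment (ρ x : ZMod N → ℂ) (k l : ZMod N) :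
    𝓕 (fun i ↦ 𝓕 (fun j ↦ ∑ s, ρ s * (x (i - s) * x (j - s))) l) k
      = 𝓕 ρ (k + l) * 𝓕 x k * 𝓕 x l := by
  have hinner : ∀ i, 𝓕 (fun j ↦ ∑ s, ρ s * (x (i - s) * x (j - s))) l
      = (∑ s, (stdAddChar (-(s * l)) * ρ s) * x (i - s)) * 𝓕 x l := by
    intro i
    simp_rw [← mul_assoc]
    rw [dft_conv (fun s ↦ ρ s * x (i - s)), dft_apply]
    simp_rw [smul_eq_mul, mul_assoc]
  simp only [hinner, dft_mul_const]
  rw [dft_conv, dft_stdAddChar_mul]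

lemma mulShift_stdAddChar_surjective : Function.Surjective (stdAddChar (N := N)).mulShift :=
  ((Fintype.bijective_iff_injective_and_card _).2
    ⟨AddChar.to_mulShift_inj_of_isPrimitive (isPrimitive_stdAddChar N), by simp⟩).2

lemma eq_comp_add_of_dft_eq {Φ Ψ : ZMod N → ℂ} {t : ZMod N}
    (h : ∀ k, 𝓕 Ψ k = stdAddChar (t * k) * 𝓕 Φ k) : Ψ = fun j ↦ Φ (j + t) :=
  dft.injective <| funext fun k ↦ by rw [h, dft_comp_add_right, smul_eq_mul]

lemma exists_ne_zero_forall_mul_eq_zero {H : AddSubgroup (ZMod N)} (hH : H ≠ ⊤) :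
    ∃ ℓ : ZMod N, ℓ ≠ 0 ∧ ∀ m ∈ H, ℓ * m = 0 := by
  refine ⟨Nat.card H, ?_, fun m hm ↦ ?_⟩
  · have hlt : Nat.card H < N := by
      simpa [Nat.card_zmod] using
        (Nat.card_le_card_of_injective _ H.subtype_injective).lt_of_ne
          (mt (H.eq_top_of_card_eq) hH)
    rw [Ne, natCast_eq_zero_iff]
    exact fun hdvd ↦ (Nat.le_of_dvd Nat.card_pos hdvd).not_gt hlt
  · rw [← nsmul_eq_mul]
    exact_mod_cast congrArg H.subtype (card_nsmul_eq_zero' (x := (⟨m, hm⟩ : H)))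

lemma closure_support_dft_eq_top {ρ : ZMod N → ℂ} (hρ : ∀ ℓ, Function.Periodic ρ ℓ → ℓ = 0) :
    AddSubgroup.closure (Function.support (𝓕 ρ)) = ⊤ := by
  by_contra hH
  obtain ⟨ℓ, hℓ, hann⟩ := exists_ne_zero_forall_mul_eq_zero hH
  have hshift : 𝓕 (fun j ↦ ρ (j + ℓ)) = 𝓕 ρ := by
    ext m
    rw [dft_comp_add_right, smul_eq_mul]
    by_cases hm : 𝓕 ρ m = 0
    · rw [hm, mul_zero]
    · rw [hann m (AddSubgroup.subset_closure hm), AddChar.map_zero_eq_one, one_mul]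
  exact hℓ (hρ ℓ (congrFun (dft.injective hshift)))

end ZMod

lemma dftR_eq_dft {L : ℕ} [NeZero L] (x : ZMod L → ℝ) : dftR x = 𝓕 (fun i ↦ (x i : ℂ)) := by
  ext k
  rw [dftR, dft_apply]
  refine sum_congr rfl fun i _ ↦ ?_
  have hcast : -(i * k) = ((-(i.val * k.val) : ℤ) : ZMod L) := by
    push_cast
    simp
  rw [hcast, stdAddChar_coe, smul_eq_mul, mul_comm]
  congr 2
  push_cast
  ring

theorem stmt_5_general (L : ℕ) [NeZero L] (x₁ x₂ ρ₁ ρ₂ : ZMod L → ℝ)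
    (hρ₁1 : ∑ s, ρ₁ s = 1) (hρ₂1 : ∑ s, ρ₂ s = 1)
    (haper : Aperiodic ρ₁)
    (hdft : ∀ k, dftR x₁ k ≠ 0)
    (hm1 : ∀ i, ∑ s, ρ₁ s * x₁ (i - s) = ∑ s, ρ₂ s * x₂ (i - s))
    (hm2 : ∀ i j, ∑ s, ρ₁ s * (x₁ (i - s) * x₁ (j - s))
                = ∑ s, ρ₂ s * (x₂ (i - s) * x₂ (j - s))) :
    ∃ s : ZMod L, (∀ i, x₂ i = x₁ (i - s)) ∧ (∀ i, ρ₂ i = ρ₁ (i + s)) := by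
  let c : (ZMod L → ℝ) → ZMod L → ℂ := fun f i ↦ (f i : ℂ)
  have h1 : ∀ k, 𝓕 (c ρ₁) k * 𝓕 (c x₁) k = 𝓕 (c ρ₂) k * 𝓕 (c x₂) k := fun k ↦ by
    simp only [← dft_conv]
    exact congrArg (𝓕 · k) (funext fun i ↦ by simp only [c]; exact_mod_cast hm1 i)
  have h2 : ∀ k l, 𝓕 (c ρ₁) (k + l) * 𝓕 (c x₁) k * 𝓕 (c x₁) l
      = 𝓕 (c ρ₂) (k + l) * 𝓕 (c x₂) k * 𝓕 (c x₂) l := fun k l ↦ by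
    simp only [← dft_dft_secondMoment]
    exact congrArg (𝓕 · k) (funext fun i ↦ congrArg (𝓕 · l) (funext fun j ↦ by
      simp only [c]; exact_mod_cast hm2 i j))
  have hmass : ∀ ρ : ZMod L → ℝ, ∑ s, ρ s = 1 → 𝓕 (c ρ) 0 = 1 := fun ρ h ↦ by
    simp only [dft_apply_zero, c]; exact_mod_cast h
  have hper : ∀ ℓ, Function.Periodic (c ρ₁) ℓ → ℓ = 0 := fun ℓ h ↦ by
    by_contra hℓ; exact haper ⟨ℓ, hℓ, fun k ↦ by simpa [c] using h k⟩
  obtain ⟨ψ, hψ⟩ := exists_addChar_of_moment_identities (by simpa [dftR_eq_dft] using hdft)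
    (hmass ρ₁ hρ₁1) (hmass ρ₂ hρ₂1) h1 h2 (closure_support_dft_eq_top hper)
  obtain ⟨t, rfl⟩ := mulShift_stdAddChar_surjective ψ
  have hx := eq_comp_add_of_dft_eq fun k ↦ (hψ k).1
  have hρ := eq_comp_add_of_dft_eq fun k ↦ (hψ k).2
  refine ⟨-t, fun i ↦ ?_, fun i ↦ ?_⟩
  · simpa [c] using congrFun hx i
  · simpa [c, sub_eq_add_neg] using (congrFun hρ (i - t)).symm

/-- Uniqueness from the first two moments: if `ρ₁` is aperiodic, `x₁` has
non-vanishing DFT, and `(x₂, ρ₂)` has the same first and second moments, then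
`x₂ = R_s x₁` and `ρ₂ = R_{-s} ρ₁` for some shift `s`. -/
theorem stmt_5 (L : ℕ) [NeZero L] (x₁ x₂ ρ₁ ρ₂ : ZMod L → ℝ)
    (hρ₁0 : ∀ s, 0 ≤ ρ₁ s) (hρ₁1 : ∑ s, ρ₁ s = 1)
    (hρ₂0 : ∀ s, 0 ≤ ρ₂ s) (hρ₂1 : ∑ s, ρ₂ s = 1)
    (haper : Aperiodic ρ₁)
    (hdft : ∀ k, dftR x₁ k ≠ 0)
    (hm1 : ∀ i, ∑ s, ρ₁ s * x₁ (i - s) = ∑ s, ρ₂ s * x₂ (i - s))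
    (hm2 : ∀ i j, ∑ s, ρ₁ s * (x₁ (i - s) * x₁ (j - s))
                = ∑ s, ρ₂ s * (x₂ (i - s) * x₂ (j - s))) :
    ∃ s : ZMod L, (∀ i, x₂ i = x₁ (i - s)) ∧ (∀ i, ρ₂ i = ρ₁ (i + s)) :=
  stmt_5_general L x₁ x₂ ρ₁ ρ₂ hρ₁1 hρ₂1 haper hdft hm1 hm2
end

section
/- If (Fx₁)[k](Fρ₁)[k] = (Fx₂)[k](Fρ₂)[k] for all k and D_{Fx₁} C_{Fρ₁} D_{Fx₁}* = D_{Fx₂} C_{Fρ₂} D_{Fx₂}*, with (Fx₁) non-vanishing and (Fρ₁)[0] = (Fρ₂)[0] = 1, then the ratio r[k] = (Fx₂)[k]/(Fx₁)[k] satisfies |r[k]| = 1 for all k, r[0] = 1, and (Fρ₁)[k−p] = (Fρ₂)[k−p]·r[k]·conj(r[p]) for all k, p; in particular Fρ₁ and Fρ₂ have the same support. -/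
open ComplexConjugate

section SecondMoment

variable {G : Type*} [AddGroup G] {f₁ f₂ g₁ g₂ : G → ℂ}

theorem norm_eq_of_mul_conj_eq {a b : ℂ} (h : a * conj a = b * conj b) : ‖a‖ = ‖b‖ := by
  rw [Complex.mul_conj, Complex.mul_conj] at h
  have h' : ‖a‖ ^ 2 = ‖b‖ ^ 2 := by
    rw [← Complex.normSq_eq_norm_sq, ← Complex.normSq_eq_norm_sq]
    exact_mod_cast h
  exact (sq_eq_sq₀ (norm_nonneg _) (norm_nonneg _)).mp h'

theorem norm_eq_of_secondMoment_eq (h₁0 : g₁ 0 = 1) (h₂0 : g₂ 0 = 1)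
    (hm : ∀ k p, f₁ k * g₁ (k - p) * conj (f₁ p) = f₂ k * g₂ (k - p) * conj (f₂ p)) (k : G) :
    ‖f₂ k‖ = ‖f₁ k‖ := by
  have h := hm k k
  rw [sub_self, h₁0, h₂0, mul_one, mul_one] at h
  exact (norm_eq_of_mul_conj_eq h).symm

theorem norm_div_eq_one_of_secondMoment_eq (h₁0 : g₁ 0 = 1) (h₂0 : g₂ 0 = 1)
    (hm : ∀ k p, f₁ k * g₁ (k - p) * conj (f₁ p) = f₂ k * g₂ (k - p) * conj (f₂ p))
    {k : G} (hk : f₁ k ≠ 0) : ‖f₂ k / f₁ k‖ = 1 := by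
  rw [norm_div, norm_eq_of_secondMoment_eq h₁0 h₂0 hm k, div_self (norm_ne_zero_iff.mpr hk)]

theorem eq_mul_div_mul_conj_div_of_secondMoment_eq
    (hm : ∀ k p, f₁ k * g₁ (k - p) * conj (f₁ p) = f₂ k * g₂ (k - p) * conj (f₂ p))
    {k p : G} (hk : f₁ k ≠ 0) (hp : f₁ p ≠ 0) :
    g₁ (k - p) = g₂ (k - p) * (f₂ k / f₁ k) * conj (f₂ p / f₁ p) := by
  have hp' : conj (f₁ p) ≠ 0 := (map_ne_zero _).mpr hp
  rw [map_div₀]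
  field_simp
  linear_combination hm k p

theorem eq_zero_iff_of_secondMoment_eq (h₁0 : g₁ 0 = 1) (h₂0 : g₂ 0 = 1)
    (hm : ∀ k p, f₁ k * g₁ (k - p) * conj (f₁ p) = f₂ k * g₂ (k - p) * conj (f₂ p))
    (hf : ∀ k, f₁ k ≠ 0) (m : G) : g₁ m = 0 ↔ g₂ m = 0 := by
  have hr : ∀ k, f₂ k / f₁ k ≠ 0 := fun k h => by
    simpa [h] using norm_div_eq_one_of_secondMoment_eq h₁0 h₂0 hm (hf k)
  have h := eq_mul_div_mul_conj_div_of_secondMoment_eq hm (hf m) (hf 0)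
  rw [sub_zero] at h
  rw [h, mul_assoc, mul_eq_zero_iff_right (mul_ne_zero (hr m) ((map_ne_zero _).mpr (hr 0)))]

end SecondMoment

/-- If the first moments agree, `(Fx₁)[k](Fρ₁)[k] = (Fx₂)[k](Fρ₂)[k]`, and the
second moments agree in the Fourier domain,
`(Fx₁)[k](Fρ₁)[k-p] conj((Fx₁)[p]) = (Fx₂)[k](Fρ₂)[k-p] conj((Fx₂)[p])`, with
`Fx₁` non-vanishing and `(Fρ₁)[0] = (Fρ₂)[0] = 1`, then the ratio
`r[k] = (Fx₂)[k]/(Fx₁)[k]` has unit modulus, `r[0] = 1`,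
`(Fρ₁)[k-p] = (Fρ₂)[k-p] r[k] conj(r[p])`, and `Fρ₁, Fρ₂` share support. -/
theorem stmt_17 (L : ℕ) [NeZero L] (x₁ x₂ ρ₁ ρ₂ : ZMod L → ℝ)
    (hx₁ : ∀ k, dftR x₁ k ≠ 0)
    (hρ₁0 : dftR ρ₁ 0 = 1) (hρ₂0 : dftR ρ₂ 0 = 1)
    (hm1 : ∀ k, dftR x₁ k * dftR ρ₁ k = dftR x₂ k * dftR ρ₂ k)
    (hm2 : ∀ k p : ZMod L,
      dftR x₁ k * dftR ρ₁ (k - p) * starRingEnd ℂ (dftR x₁ p)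
        = dftR x₂ k * dftR ρ₂ (k - p) * starRingEnd ℂ (dftR x₂ p)) :
    (∀ k, ‖dftR x₂ k / dftR x₁ k‖ = 1)
    ∧ dftR x₂ 0 / dftR x₁ 0 = 1
    ∧ (∀ k p : ZMod L,
        dftR ρ₁ (k - p)
          = dftR ρ₂ (k - p) * (dftR x₂ k / dftR x₁ k)
              * starRingEnd ℂ (dftR x₂ p / dftR x₁ p))
    ∧ (∀ m : ZMod L, dftR ρ₁ m = 0 ↔ dftR ρ₂ m = 0) := by
  have hx0 : dftR x₂ 0 = dftR x₁ 0 := by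
    simpa [hρ₁0, hρ₂0] using (hm1 0).symm
  exact ⟨fun k => norm_div_eq_one_of_secondMoment_eq hρ₁0 hρ₂0 hm2 (hx₁ k),
    by rw [hx0, div_self (hx₁ 0)],
    fun k p => eq_mul_div_mul_conj_div_of_secondMoment_eq hm2 (hx₁ k) (hx₁ p),
    eq_zero_iff_of_secondMoment_eq hρ₁0 hρ₂0 hm2 hx₁⟩
end
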